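/- Let R be a (not necessarily commutative) ring with no zero divisors, equipped with an involution (an additive, unital, anti-multiplicative map star : R → R with star (star r) = r for all r), and suppose that the set of nonzero elements of R satisfies the Ore condition, so that the Ore localization Q of R at its nonzero elements is a division ring and the canonical map ι : R → Q is an injective ring homomorphism. Then there exists a unique map σ : Q → Q such that σ is additive, σ(1) = 1, σ(x·y) = σ(y)·σ(x) for all x, y ∈ Q, σ(σ(x)) = x for all x ∈ Q, and σ(ι(r)) = ι(star r) for all r ∈ R. In other words, the involution of R extends uniquely to an involution of its division ring of fractions Q. -/

import Mathlib

open OreLocalization nonZeroDivisors MulOpposite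

section Aux

variable (R : Type*) [Ring R] [Nontrivial R] [NoZeroDivisors R] [StarRing R]
    [OreLocalization.OreSet (nonZeroDivisors R)]

local notation "Q" => OreLocalization (nonZeroDivisors R) R
local notation "ι" => OreLocalization.numeratorRingHom (S := nonZeroDivisors R) (R := R)

lemma aux_iota_inj : Function.Injective (ι : R → Q) := by
  apply OreLocalization.numeratorHom_inj
  intro s hs
  have hs0 : s ≠ 0 := nonZeroDivisors.ne_zero hs
  simp only [mem_nonZeroDivisorsLeft_iff]
  intro y hy
  rcases mul_eq_zero.mp hy with h | h
  · exact absurd h hs0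
  · exact h

lemma aux_iota_ne_zero {r : R} (hr : r ≠ 0) : (ι r : Q) ≠ 0 := by
  intro h
  exact hr (aux_iota_inj R (by simpa using h))

lemma aux_star_ne_zero {s : nonZeroDivisors R} : (star (s : R) : R) ≠ 0 := by
  have hs : (s : R) ≠ 0 := nonZeroDivisors.coe_ne_zero s
  simpa using hs

/-- `r ↦ op (ι (star r))` as a ring hom `R →+* Qᵐᵒᵖ`. -/
noncomputable def auxF : R →+* Qᵐᵒᵖ where
  toFun r := op ((ι (star r) : Q))
  map_one' := by
    show op ((ι (star (1 : R)) : Q)) = 1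
    rw [star_one, map_one, op_one]
  map_mul' r t := by
    show op ((ι (star (r * t)) : Q)) = op ((ι (star r) : Q)) * op ((ι (star t) : Q))
    rw [star_mul, map_mul, ← op_mul]
  map_zero' := by
    show op ((ι (star (0 : R)) : Q)) = 0
    rw [star_zero, map_zero, op_zero]
  map_add' r t := by
    show op ((ι (star (r + t)) : Q)) = op ((ι (star r) : Q)) + op ((ι (star t) : Q))
    rw [star_add, map_add, op_add]

/-- units version of `auxF` on `R⁰`. -/
noncomputable def auxFS : (nonZeroDivisors R) →* Units (Qᵐᵒᵖ) where
  toFun s := Units.mk0 (op ((ι (star (s : R)) : Q)))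
    (by simpa using aux_iota_ne_zero R (aux_star_ne_zero R (s := s)))
  map_one' := by
    ext
    show op ((ι (star ((1 : nonZeroDivisors R) : R)) : Q)) = 1
    rw [OneMemClass.coe_one, star_one, map_one, op_one]
  map_mul' s t := by
    ext
    show op ((ι (star (((s * t : nonZeroDivisors R)) : R)) : Q))
        = op ((ι (star (s : R)) : Q)) * op ((ι (star (t : R)) : Q))
    rw [Submonoid.coe_mul, star_mul, map_mul, ← op_mul]

lemma auxHF : ∀ s : nonZeroDivisors R, auxF R s = auxFS R s := fun _ => rfl

/-- The extension of `star` to `Q`, as a ring hom `Q →+* Qᵐᵒᵖ`. -/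
noncomputable def auxSigmaHom : Q →+* Qᵐᵒᵖ :=
  OreLocalization.universalHom (auxF R) (auxFS R) (auxHF R)

/-- units version of `ι` on `R⁰`. -/
noncomputable def auxGS : (nonZeroDivisors R) →* Units Q where
  toFun s := Units.mk0 ((ι (s : R) : Q))
    (aux_iota_ne_zero R (nonZeroDivisors.coe_ne_zero s))
  map_one' := by
    ext
    show (ι ((1 : nonZeroDivisors R) : R) : Q) = 1
    rw [OneMemClass.coe_one, map_one]
  map_mul' s t := by
    ext
    show (ι (((s * t : nonZeroDivisors R)) : R) : Q) = (ι (s : R) : Q) * (ι (t : R) : Q)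
    rw [Submonoid.coe_mul, map_mul]

lemma aux_oreDiv_eq (r : R) (s : nonZeroDivisors R) :
    (r /ₒ s : Q) = ((ι (s : R) : Q))⁻¹ * (ι r : Q) := by
  have h : (RingHom.id Q) =
      OreLocalization.universalHom (numeratorRingHom (S := nonZeroDivisors R)) (auxGS R)
        (fun _ => rfl) :=
    OreLocalization.universalHom_unique _ _ _ _ (fun r => rfl)
  have h2 := OreLocalization.universalHom_apply (numeratorRingHom (S := nonZeroDivisors R))
    (auxGS R) (fun _ => rfl) (r := r) (s := s)
  calc (r /ₒ s : Q) = (RingHom.id Q) (r /ₒ s) := rfl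
    _ = (((auxGS R s)⁻¹ : Units Q) : Q) * (ι r : Q) := by rw [h]; exact h2
    _ = ((ι (s : R) : Q))⁻¹ * (ι r : Q) := by
        congr 1

lemma auxSigmaHom_apply (r : R) (s : nonZeroDivisors R) :
    unop (auxSigmaHom R (r /ₒ s)) = (ι (star r) : Q) * ((ι (star (s : R)) : Q))⁻¹ := by
  have h := OreLocalization.universalHom_apply (auxF R) (auxFS R) (auxHF R) (r := r) (s := s)
  rw [show OreLocalization.universalHom (auxF R) (auxFS R) (auxHF R) = auxSigmaHom R from rfl]
    at h
  rw [h, unop_mul]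
  congr 1

end Aux

/-- **Extension of an involution to the Ore field of fractions.**
Let `R` be a ring with no zero divisors, equipped with an involution `star`, and
suppose that the set of (non-zero-divisor, i.e. nonzero) elements of `R` satisfies
the Ore condition, so that the Ore localization `Q = OreLocalization R⁰ R` is a
division ring into which `R` embeds via the canonical ring homomorphism
`ι = OreLocalization.numeratorRingHom`.  Then there is a unique map `σ : Q → Q`
which is additive, unital, anti-multiplicative and involutive, and which extends
the involution of `R` in the sense that `σ (ι r) = ι (star r)` for all `r : R`. -/
theorem involution_extends_uniquely_to_ore_field_of_fractions
    (R : Type*) [Ring R] [Nontrivial R] [NoZeroDivisors R] [StarRing R]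
    [OreLocalization.OreSet (nonZeroDivisors R)] :
    ∃! σ : OreLocalization (nonZeroDivisors R) R → OreLocalization (nonZeroDivisors R) R,
      (∀ x y, σ (x + y) = σ x + σ y) ∧
      σ 1 = 1 ∧
      (∀ x y, σ (x * y) = σ y * σ x) ∧
      (∀ x, σ (σ x) = x) ∧
      (∀ r : R, σ (OreLocalization.numeratorRingHom (S := nonZeroDivisors R) r)
          = OreLocalization.numeratorRingHom (S := nonZeroDivisors R) (star r)) := by
  classical
  set Q := OreLocalization (nonZeroDivisors R) R
  set ι := OreLocalization.numeratorRingHom (S := nonZeroDivisors R) (R := R) with hι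
  set σ : Q → Q := fun x => MulOpposite.unop (auxSigmaHom R x) with hσ
  have hext : ∀ r : R, σ (ι r) = ι (star r) := by
    intro r
    have := OreLocalization.universalHom_commutes (auxF R) (auxFS R) (auxHF R) (r := r)
    simp only [hσ]
    rw [show (ι r : Q) = OreLocalization.numeratorHom r from rfl]
    rw [show auxSigmaHom R (OreLocalization.numeratorHom r)
        = OreLocalization.universalHom (auxF R) (auxFS R) (auxHF R)
            (OreLocalization.numeratorHom r) from rfl, this]
    rfl
  have hadd : ∀ x y : Q, σ (x + y) = σ x + σ y := by
    intro x y; simp only [hσ, map_add, MulOpposite.unop_add]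
  have hone : σ 1 = 1 := by simp [hσ]
  have hmul : ∀ x y : Q, σ (x * y) = σ y * σ x := by
    intro x y; simp only [hσ, map_mul, MulOpposite.unop_mul]
  have hinv : ∀ x : Q, σ x⁻¹ = (σ x)⁻¹ := by
    intro x
    simp only [hσ, map_inv₀, MulOpposite.unop_inv]
  have hinv2 : ∀ x : Q, σ (σ x) = x := by
    intro x
    induction x using OreLocalization.ind with
    | _ r s =>
      rw [aux_oreDiv_eq R r s, ← hι]
      simp only [hmul, hinv, hext, star_star]
  refine ⟨σ, ⟨hadd, hone, hmul, hinv2, hext⟩, ?_⟩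
  rintro σ' ⟨hadd', hone', hmul', hinv2', hext'⟩
  funext x
  induction x using OreLocalization.ind with
  | _ r s =>
    have hσval : σ (r /ₒ s) = ι (star r) * (ι (star (s : R)))⁻¹ := auxSigmaHom_apply R r s
    have hu : (ι (s : R) : Q) ≠ 0 := aux_iota_ne_zero R (nonZeroDivisors.coe_ne_zero s)
    have hinv' : σ' ((ι (s : R) : Q)⁻¹) = (ι (star (s : R)) : Q)⁻¹ := by
      have h1 : σ' ((ι (s : R) : Q)⁻¹) * σ' (ι (s : R)) = 1 := by
        rw [← hmul', mul_inv_cancel₀ hu, hone']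
      rw [hext'] at h1
      exact eq_inv_of_mul_eq_one_left h1
    rw [hσval, aux_oreDiv_eq R r s, hmul', hext', hinv']
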